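/- For the block upper triangular matrix M = [[A, B],[0, A]] with A, B ∈ ℝ^{n×n}, the exponential satisfies exp(M) = [[exp(A), L],[0, exp(A)]] where L is the Fréchet derivative of exp at A in the direction B, i.e., L = Σ_{ℓ≥1} (1/ℓ!) Σ_{k=0}^{ℓ-1} A^k B A^{ℓ-1-k}. -/

import Mathlib

/-!
Every power of `M = fromBlocks A B 0 D` is again block upper triangular, with diagonal blocks
`A ^ k`, `D ^ k` and upper-right block `∑_{i<k} A^i B D^(k-1-i)`. A series of matrices converges
entrywise, so the exponential series of `M` can be summed block by block: the diagonal blocks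
are the exponential series of `A` and `D`, and the upper-right block is the stated series
after dropping its vanishing `k = 0` term.
-/

open Matrix Finset NormedSpace
open scoped Nat

section

variable {X l m n o : Type*}

theorem HasSum.matrix_submatrix {R : Type*} [AddCommMonoid R] [TopologicalSpace R]
    {f : X → Matrix m n R} {a : Matrix m n R} (hf : HasSum f a) (r : l → m) (c : o → n) :
    HasSum (fun x => (f x).submatrix r c) (a.submatrix r c) :=
  Pi.hasSum.2 fun i => Pi.hasSum.2 fun j => Pi.hasSum.1 (Pi.hasSum.1 hf (r i)) (c j)

theorem Matrix.fromBlocks_zero₂₁_pow {α : Type*} [Semiring α] [Fintype m] [Fintype n]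
    [DecidableEq m] [DecidableEq n] (A : Matrix m m α) (B : Matrix m n α) (D : Matrix n n α)
    (k : ℕ) : fromBlocks A B 0 D ^ k =
      fromBlocks (A ^ k) (∑ i ∈ range k, A ^ i * B * D ^ (k - 1 - i)) 0 (D ^ k) := by
  induction k with
  | zero => simp [fromBlocks_one]
  | succ k ih =>
    have h₁₂ : A * ∑ i ∈ range k, A ^ i * B * D ^ (k - 1 - i) + B * D ^ k =
        ∑ i ∈ range (k + 1), A ^ i * B * D ^ (k - i) := by
      rw [sum_range_succ', Matrix.mul_sum]
      congr 1 <;> simp [← Matrix.mul_assoc, ← pow_succ', Nat.sub_sub, add_comm 1]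
    simp [pow_succ', ih, fromBlocks_multiply, h₁₂]

variable {𝕂 : Type*} [RCLike 𝕂] [Fintype m] [Fintype n] [DecidableEq m] [DecidableEq n]

theorem Matrix.exp_series_hasSum_exp (A : Matrix m m 𝕂) :
    HasSum (fun k => (k ! : 𝕂)⁻¹ • A ^ k) (exp A) :=
  open scoped Norms.Operator in exp_series_hasSum_exp' A

theorem Matrix.exp_fromBlocks_zero₂₁ (A : Matrix m m 𝕂) (B : Matrix m n 𝕂) (D : Matrix n n 𝕂) :
    exp (fromBlocks A B 0 D) =
      fromBlocks (exp A)
        (∑' k : ℕ, ((k + 1)! : 𝕂)⁻¹ • ∑ i ∈ range (k + 1), A ^ i * B * D ^ (k - i)) 0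
        (exp D) := by
  set E := exp (fromBlocks A B 0 D)
  have hE := exp_series_hasSum_exp (fromBlocks A B 0 D)
  simp only [fromBlocks_zero₂₁_pow, fromBlocks_smul, smul_zero] at hE
  have h₁₁ : HasSum (fun k => (k ! : 𝕂)⁻¹ • A ^ k) E.toBlocks₁₁ :=
    hE.matrix_submatrix Sum.inl Sum.inl
  have h₁₂ : HasSum (fun k => (k ! : 𝕂)⁻¹ • ∑ i ∈ range k, A ^ i * B * D ^ (k - 1 - i))
      E.toBlocks₁₂ :=
    hE.matrix_submatrix Sum.inl Sum.inr
  have h₂₁ : HasSum (fun _ => 0) E.toBlocks₂₁ := hE.matrix_submatrix Sum.inr Sum.inl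
  have h₂₂ : HasSum (fun k => (k ! : 𝕂)⁻¹ • D ^ k) E.toBlocks₂₂ :=
    hE.matrix_submatrix Sum.inr Sum.inr
  rw [← fromBlocks_toBlocks E, h₁₁.unique (exp_series_hasSum_exp A),
    h₂₂.unique (exp_series_hasSum_exp D), h₂₁.unique hasSum_zero, ← h₁₂.tsum_eq,
    h₁₂.summable.tsum_eq_zero_add]
  simp

end

/-- The exponential of the block matrix `[[A, B], [0, A]]` is
`[[exp A, L], [0, exp A]]` where `L` is the Fréchet derivative of `exp` at `A`
in the direction `B`, given by the series `∑_{ℓ≥1} (1/ℓ!) ∑_{k<ℓ} A^k B A^{ℓ-1-k}`. -/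
theorem exp_block_triangular (n : ℕ) (A B : Matrix (Fin n) (Fin n) ℝ) :
    NormedSpace.exp (Matrix.fromBlocks A B 0 A) =
      Matrix.fromBlocks (NormedSpace.exp A)
        (∑' ℓ : ℕ, ((Nat.factorial (ℓ + 1) : ℝ))⁻¹ •
          ∑ k ∈ Finset.range (ℓ + 1), A ^ k * B * A ^ (ℓ - k))
        0 (NormedSpace.exp A) :=
  exp_fromBlocks_zero₂₁ A B A
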